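/- Let E_XY be the qubit channel with Kraus operators {X/√2, Y/√2}. Define the switched channel on ℂ²⊗ℂ² by S(ρ⊗|+⟩⟨+|) = Σ_{i,j} K_{ij} (ρ⊗|+⟩⟨+|) K_{ij}†, where for Kraus operators E_i, E_j ∈ {X/√2, Y/√2} one sets K_{ij} = E_i E_j ⊗ |0⟩⟨0| + E_j E_i ⊗ |1⟩⟨1|. Then for every density matrix ρ on ℂ², S(ρ⊗|+⟩⟨+|) = (1/2) ρ ⊗ |+⟩⟨+| + (1/2) ZρZ ⊗ |−⟩⟨−|. In particular, measuring the control qubit in the {|+⟩,|−⟩} basis and applying Z conditionally recovers ρ perfectly. -/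
import Mathlib


open Matrix Kronecker
open scoped ComplexOrder

noncomputable def PX : Matrix (Fin 2) (Fin 2) ℂ := !![0, 1; 1, 0]
noncomputable def PY : Matrix (Fin 2) (Fin 2) ℂ := !![0, -Complex.I; Complex.I, 0]
noncomputable def PZ : Matrix (Fin 2) (Fin 2) ℂ := !![1, 0; 0, -1]
noncomputable def proj0 : Matrix (Fin 2) (Fin 2) ℂ := !![1, 0; 0, 0]
noncomputable def proj1 : Matrix (Fin 2) (Fin 2) ℂ := !![0, 0; 0, 1]
noncomputable def projPlus : Matrix (Fin 2) (Fin 2) ℂ := (1/2 : ℂ) • !![1, 1; 1, 1]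
noncomputable def projMinus : Matrix (Fin 2) (Fin 2) ℂ := (1/2 : ℂ) • !![1, -1; -1, 1]

/-- Kraus operators of the channel E_XY: X/√2 and Y/√2. -/
noncomputable def Ek : Fin 2 → Matrix (Fin 2) (Fin 2) ℂ :=
  ![((Real.sqrt 2 : ℂ))⁻¹ • PX, ((Real.sqrt 2 : ℂ))⁻¹ • PY]

/-- Kraus operators of the quantum SWITCH of two copies of E_XY. -/
noncomputable def Kswitch (i j : Fin 2) : Matrix (Fin 2 × Fin 2) (Fin 2 × Fin 2) ℂ :=
  (Ek i * Ek j) ⊗ₖ proj0 + (Ek j * Ek i) ⊗ₖ proj1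

/-- The switched channel of two copies of E_XY with control |+⟩⟨+| acts as
ρ ↦ (1/2) ρ ⊗ |+⟩⟨+| + (1/2) ZρZ ⊗ |−⟩⟨−|. -/
theorem stmt1 (ρ : Matrix (Fin 2) (Fin 2) ℂ) (hρ : ρ.PosSemidef) (htr : ρ.trace = 1) :
    ∑ i : Fin 2, ∑ j : Fin 2, Kswitch i j * (ρ ⊗ₖ projPlus) * (Kswitch i j)ᴴ
      = (1/2 : ℂ) • (ρ ⊗ₖ projPlus) + (1/2 : ℂ) • ((PZ * ρ * PZ) ⊗ₖ projMinus) := by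
  have hs : ((Real.sqrt 2 : ℂ))⁻¹ * ((Real.sqrt 2 : ℂ))⁻¹ = 1/2 := by
    rw [← mul_inv]
    norm_cast
    rw [Real.mul_self_sqrt (by norm_num : (0:ℝ) ≤ 2)]
    norm_num
  have hsq : (Real.sqrt 2 : ℂ)^2 = 2 := by
    rw [sq]; exact_mod_cast congrArg Complex.ofReal (Real.mul_self_sqrt (by norm_num : (0:ℝ) ≤ 2))
  have e00 : Ek 0 * Ek 0 = (1/2 : ℂ) • 1 := by
    ext i j; fin_cases i <;> fin_cases j <;>
      simp [Ek, PX, Matrix.mul_apply, Fin.sum_univ_two, Matrix.one_apply, hs]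
  have e11 : Ek 1 * Ek 1 = (1/2 : ℂ) • 1 := by
    ext i j; fin_cases i <;> fin_cases j <;>
      simp [Ek, PY, Matrix.mul_apply, Fin.sum_univ_two, Matrix.one_apply, hs] <;> ring_nf <;>
      simp [hsq, Complex.I_sq] <;> ring_nf <;> simp [hsq]
  have e01 : Ek 0 * Ek 1 = (Complex.I/2 : ℂ) • PZ := by
    ext i j; fin_cases i <;> fin_cases j <;>
      simp [Ek, PX, PY, PZ, Matrix.mul_apply, Fin.sum_univ_two] <;> ring_nf <;>
      simp [hsq, Complex.I_sq] <;> ring_nf <;> simp [hsq] <;> ring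
  have e10 : Ek 1 * Ek 0 = (-Complex.I/2 : ℂ) • PZ := by
    ext i j; fin_cases i <;> fin_cases j <;>
      simp [Ek, PX, PY, PZ, Matrix.mul_apply, Fin.sum_univ_two] <;> ring_nf <;>
      simp [hsq, Complex.I_sq] <;> ring_nf <;> simp [hsq] <;> ring
  have hp : proj0 + proj1 = 1 := by
    ext i j; fin_cases i <;> fin_cases j <;> simp [proj0, proj1, Matrix.one_apply]
  have hz : proj0 - proj1 = PZ := by
    ext i j; fin_cases i <;> fin_cases j <;> simp [proj0, proj1, PZ]
  have k00 : Kswitch 0 0 = (1/2 : ℂ) • 1 := by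
    rw [Kswitch, e00, Matrix.smul_kronecker, Matrix.smul_kronecker, ← smul_add,
      ← Matrix.kronecker_add, hp, Matrix.one_kronecker_one]
  have k11 : Kswitch 1 1 = (1/2 : ℂ) • 1 := by
    rw [Kswitch, e11, Matrix.smul_kronecker, Matrix.smul_kronecker, ← smul_add,
      ← Matrix.kronecker_add, hp, Matrix.one_kronecker_one]
  have k01 : Kswitch 0 1 = (Complex.I/2 : ℂ) • (PZ ⊗ₖ PZ) := by
    rw [Kswitch, e01, e10]
    ext ⟨a,b⟩ ⟨c,d⟩
    fin_cases a <;> fin_cases b <;> fin_cases c <;> fin_cases d <;>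
      simp [Matrix.kroneckerMap_apply, PZ, proj0, proj1] <;> ring
  have k10 : Kswitch 1 0 = (-Complex.I/2 : ℂ) • (PZ ⊗ₖ PZ) := by
    rw [Kswitch, e01, e10]
    ext ⟨a,b⟩ ⟨c,d⟩
    fin_cases a <;> fin_cases b <;> fin_cases c <;> fin_cases d <;>
      simp [Matrix.kroneckerMap_apply, PZ, proj0, proj1] <;> ring
  have hZH : PZᴴ = PZ := by
    ext i j; fin_cases i <;> fin_cases j <;> simp [PZ]
  have hZP : PZ * projPlus * PZ = projMinus := by
    ext i j; fin_cases i <;> fin_cases j <;>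
      simp [PZ, projPlus, projMinus, Matrix.mul_apply, Fin.sum_univ_two] <;> ring
  have hKH : (PZ ⊗ₖ PZ)ᴴ = PZ ⊗ₖ PZ := by
    ext ⟨a,b⟩ ⟨c,d⟩
    fin_cases a <;> fin_cases b <;> fin_cases c <;> fin_cases d <;>
      simp [Matrix.conjTranspose_apply, Matrix.kroneckerMap_apply, PZ]
  have term : (PZ ⊗ₖ PZ) * (ρ ⊗ₖ projPlus) * (PZ ⊗ₖ PZ)ᴴ
      = (PZ * ρ * PZ) ⊗ₖ projMinus := by
    rw [hKH, ← Matrix.mul_kronecker_mul, ← Matrix.mul_kronecker_mul, hZP]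
  rw [Fin.sum_univ_two, Fin.sum_univ_two, Fin.sum_univ_two, k00, k11, k01, k10]
  simp only [Matrix.conjTranspose_smul, Matrix.smul_mul, Matrix.mul_smul, smul_smul, term,
    Matrix.one_mul, Matrix.mul_one, Matrix.conjTranspose_one]
  have s1 : star (1/2 : ℂ) * (1/2) = 1/4 := by norm_num [Complex.ext_iff]
  have s2 : star (Complex.I/2 : ℂ) * (Complex.I/2) = 1/4 := by
    norm_num [Complex.ext_iff, Complex.div_re, Complex.div_im, Complex.normSq]
  have s3 : star (-Complex.I/2 : ℂ) * (-Complex.I/2) = 1/4 := by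
    norm_num [Complex.ext_iff, Complex.div_re, Complex.div_im, Complex.normSq]
  rw [s1, s2, s3]
  module
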